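/- arXiv:1912.05167 — 3 statements merged into one kernel-verified Lean document; each statement's English description precedes it below -/
import Mathlib

section
/- Let E = V(x^3+y^3+z^3), and let η be a primitive 9th root of unity. A point p = (a:b:1) ∈ E with ab ≠ 0 satisfies 3p ∈ {(1:-1:0),(1:-η^3:0),(1:-η^6:0)} (the fixed set of τ2^2) if and only if a^6 + a^3 + 1 = 0, equivalently (a^3,b^3) = (η^3,η^6) or (a^3,b^3) = (η^6,η^3). -/
open scoped Classical

noncomputable section

/-- Affine representatives `(a, b, c)` of points `(a : b : c)` of `ℙ²`. -/
abbrev Pt (k : Type*) := k × k × k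

variable {k : Type*} [Field k]

/-- Projective equality of representatives: `q` is a nonzero scalar multiple of `p`. -/
def projEq (p q : Pt k) : Prop :=
  ∃ t : k, t ≠ 0 ∧ q = (t * p.1, t * p.2.1, t * p.2.2)

/-- The Hesse cubic `x³ + y³ + z³ - 3λxyz = 0`. -/
def onHesse (lam : k) (p : Pt k) : Prop :=
  p.1 ^ 3 + p.2.1 ^ 3 + p.2.2 ^ 3 - 3 * lam * p.1 * p.2.1 * p.2.2 = 0

/-- The zero element `o_E = (1 : -1 : 0)` of the group law. -/
def oE : Pt k := (1, -1, 0)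

/-- First chord formula for the addition on the Hesse cubic:
`p + q = (acβ² - b²αγ : bcα² - a²βγ : abγ² - c²αβ)`. -/
def add1 (p q : Pt k) : Pt k :=
  (p.1 * p.2.2 * q.2.1 ^ 2 - p.2.1 ^ 2 * q.1 * q.2.2,
   p.2.1 * p.2.2 * q.1 ^ 2 - p.1 ^ 2 * q.2.1 * q.2.2,
   p.1 * p.2.1 * q.2.2 ^ 2 - p.2.2 ^ 2 * q.1 * q.2.1)

/-- Alternate chord formula for the addition on the Hesse cubic:
`p + q = (abα² - c²βγ : acγ² - b²αβ : bcβ² - a²αγ)`. -/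
def add2 (p q : Pt k) : Pt k :=
  (p.1 * p.2.1 * q.1 ^ 2 - p.2.2 ^ 2 * q.2.1 * q.2.2,
   p.1 * p.2.2 * q.2.2 ^ 2 - p.2.1 ^ 2 * q.1 * q.2.1,
   p.2.1 * p.2.2 * q.2.1 ^ 2 - p.1 ^ 2 * q.1 * q.2.2)

/-- The addition on the Hesse cubic: use the first formula when it is defined
(nonzero), otherwise the alternate one. -/
def hesseAdd (p q : Pt k) : Pt k :=
  if add1 p q ≠ (0, 0, 0) then add1 p q else add2 p q

/-- The inverse `(a : b : c) ↦ (b : a : c)`. -/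
def hesseNeg (p : Pt k) : Pt k := (p.2.1, p.1, p.2.2)

/-- Subtraction: `p - q = p + (-q)`. -/
def hesseSub (p q : Pt k) : Pt k := hesseAdd p (hesseNeg q)

/-- `nP n p` is a representative of `np = p + ⋯ + p` (`n` summands). -/
def nP : ℕ → Pt k → Pt k
  | 0, _ => oE
  | n + 1, p => hesseAdd (nP n p) p

/-- `p` is an `n`-torsion point: `np = o_E`. -/
def isTor (n : ℕ) (p : Pt k) : Prop := projEq (nP n p) (oE : Pt k)


/-! With `u = a³`, doubling `p = (a : b : 1)` gives `(b(u - 1) : a(1 - b³) : b³ - u)`, and one more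
chord step, simplified by `u + b³ + 1 = 0`, gives `3p` with third coordinate `-3ab(u² + u + 1)`.
So `3p` lies on the line `z = 0`, which meets `E` in the three points `(1 : -ω : 0)` with `ω³ = 1`,
exactly when `u² + u + 1 = 0`; then `u³ = 1` and `3p = 3(1 - u) · (1 : -u² : 0)`. -/

section Tripling

theorem hesseAdd_of_add1_ne_zero {p q : Pt k} (h : add1 p q ≠ (0, 0, 0)) :
    hesseAdd p q = add1 p q :=
  if_pos h

theorem hesseAdd_of_add1_eq_zero {p q : Pt k} (h : add1 p q = (0, 0, 0)) :
    hesseAdd p q = add2 p q :=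
  if_neg (not_not.mpr h)

theorem third_eq_zero_of_projEq {p : Pt k} {x y : k} (h : projEq p (x, y, 0)) : p.2.2 = 0 := by
  obtain ⟨t, ht, heq⟩ := h
  exact (mul_eq_zero.mp (congrArg (fun r : Pt k => r.2.2) heq).symm).resolve_left ht

theorem projEq_mk_mul_zero {x : k} (hx : x ≠ 0) (c : k) : projEq (x, c * x, 0) (1, c, 0) :=
  ⟨x⁻¹, inv_ne_zero hx, by simp [hx, mul_comm c x]⟩

theorem nP_one_affine (a b : k) : nP 1 ((a, b, 1) : Pt k) = (-a, -b, -1) := by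
  have h : add1 (oE : Pt k) (a, b, 1) = (-a, -b, -1) := by simp [add1, oE]
  rw [nP, nP, hesseAdd_of_add1_ne_zero (by simp [h]), h]

theorem nP_two_affine (a b : k) :
    nP 2 ((a, b, 1) : Pt k) = (b * (a ^ 3 - 1), a * (1 - b ^ 3), b ^ 3 - a ^ 3) := by
  have h : add1 ((-a, -b, -1) : Pt k) (a, b, 1) = (0, 0, 0) := by
    simp only [add1, Prod.mk.injEq]; refine ⟨?_, ?_, ?_⟩ <;> ring
  rw [nP, nP_one_affine, hesseAdd_of_add1_eq_zero h]
  simp only [add2, Prod.mk.injEq]; refine ⟨?_, ?_, ?_⟩ <;> ring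

variable {a b : k}

theorem add1_nP_two_affine (hE : a ^ 3 + b ^ 3 + 1 = 0) :
    add1 (nP 2 ((a, b, 1) : Pt k)) (a, b, 1) =
      (a ^ 9 - 3 * a ^ 6 - 6 * a ^ 3 - 1, -a ^ 9 - 6 * a ^ 6 - 3 * a ^ 3 + 1,
        -(3 * a * b * (a ^ 6 + a ^ 3 + 1))) := by
  rw [nP_two_affine]
  simp only [add1, Prod.mk.injEq]
  refine ⟨?_, ?_, ?_⟩
  · linear_combination (1 - b ^ 3 + 4 * a ^ 3 - a ^ 6) * hE
  · linear_combination (-1 + 4 * a ^ 3 - a ^ 3 * b ^ 3 + a ^ 6) * hE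
  · linear_combination (2 * a * b - a * b ^ 4 + 2 * a ^ 4 * b) * hE

theorem tripling_x_eq (h : a ^ 6 + a ^ 3 + 1 = 0) :
    a ^ 9 - 3 * a ^ 6 - 6 * a ^ 3 - 1 = 3 * (1 - a ^ 3) := by
  linear_combination (a ^ 3 - 4) * h

theorem tripling_x_ne_zero (h3 : (3 : k) ≠ 0) (h : a ^ 6 + a ^ 3 + 1 = 0) :
    a ^ 9 - 3 * a ^ 6 - 6 * a ^ 3 - 1 ≠ 0 := by
  rw [tripling_x_eq h]
  refine mul_ne_zero h3 fun h1 => h3 ?_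
  linear_combination h + (a ^ 3 + 2) * h1

theorem nP_three_affine (h3 : (3 : k) ≠ 0) (hab : a * b ≠ 0) (hE : a ^ 3 + b ^ 3 + 1 = 0) :
    nP 3 ((a, b, 1) : Pt k) =
      (a ^ 9 - 3 * a ^ 6 - 6 * a ^ 3 - 1, -a ^ 9 - 6 * a ^ 6 - 3 * a ^ 3 + 1,
        -(3 * a * b * (a ^ 6 + a ^ 3 + 1))) := by
  have hne : add1 (nP 2 ((a, b, 1) : Pt k)) (a, b, 1) ≠ (0, 0, 0) := by
    rw [add1_nP_two_affine hE]
    rintro h0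
    simp only [Prod.mk.injEq] at h0
    obtain ⟨hx, -, hz⟩ := h0
    obtain ⟨ha, hb⟩ := mul_ne_zero_iff.mp hab
    have h : a ^ 6 + a ^ 3 + 1 = 0 := by simpa [h3, ha, hb] using hz
    exact tripling_x_ne_zero h3 h hx
  rw [nP, hesseAdd_of_add1_ne_zero hne, add1_nP_two_affine hE]

theorem nP_three_third_eq_zero_iff (h3 : (3 : k) ≠ 0) (hab : a * b ≠ 0)
    (hE : a ^ 3 + b ^ 3 + 1 = 0) :
    (nP 3 ((a, b, 1) : Pt k)).2.2 = 0 ↔ a ^ 6 + a ^ 3 + 1 = 0 := by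
  obtain ⟨ha, hb⟩ := mul_ne_zero_iff.mp hab
  rw [nP_three_affine h3 hab hE]
  simp [h3, ha, hb]

theorem projEq_nP_three_of_sq_add_add_one (h3 : (3 : k) ≠ 0) (hab : a * b ≠ 0)
    (hE : a ^ 3 + b ^ 3 + 1 = 0) (h : a ^ 6 + a ^ 3 + 1 = 0) :
    projEq (nP 3 ((a, b, 1) : Pt k)) (1, -a ^ 6, 0) := by
  have hy : -a ^ 9 - 6 * a ^ 6 - 3 * a ^ 3 + 1 = -a ^ 6 * (a ^ 9 - 3 * a ^ 6 - 6 * a ^ 3 - 1) := by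
    linear_combination (a ^ 9 - 4 * a ^ 6 - 4 * a ^ 3 + 1) * h
  rw [nP_three_affine h3 hab hE, hy, h, mul_zero, neg_zero]
  exact projEq_mk_mul_zero (tripling_x_ne_zero h3 h) _

end Tripling

theorem IsPrimitiveRoot.sq_add_add_one_eq_zero_iff {R : Type*} [CommRing R] [IsDomain R]
    {ω : R} (hω : IsPrimitiveRoot ω 3) {x : R} :
    x ^ 2 + x + 1 = 0 ↔ x = ω ∨ x = ω ^ 2 := by
  have hω3 : ω ^ 3 = 1 := hω.pow_eq_one
  have hsum : ω ^ 2 + ω + 1 = 0 := by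
    have h := hω.geom_sum_eq_zero (by norm_num)
    simp only [Finset.sum_range_succ, Finset.sum_range_zero] at h
    linear_combination h
  have hfac : x ^ 2 + x + 1 = (x - ω) * (x - ω ^ 2) := by
    linear_combination x * hsum - hω3
  rw [hfac, mul_eq_zero, sub_eq_zero, sub_eq_zero]

theorem fermat_triple_in_fixed_iff_general {k : Type*} [Field k]
    (eta : k) (heta : IsPrimitiveRoot eta 9) (a b : k) (hab : a * b ≠ 0)
    (hE : onHesse (0 : k) ((a, b, 1) : Pt k)) :
    ((projEq (nP 3 ((a, b, 1) : Pt k)) ((1, -1, 0) : Pt k) ∨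
      projEq (nP 3 ((a, b, 1) : Pt k)) ((1, -eta ^ 3, 0) : Pt k) ∨
      projEq (nP 3 ((a, b, 1) : Pt k)) ((1, -eta ^ 6, 0) : Pt k)) ↔
        a ^ 6 + a ^ 3 + 1 = 0) ∧
    (a ^ 6 + a ^ 3 + 1 = 0 ↔
      ((a ^ 3 = eta ^ 3 ∧ b ^ 3 = eta ^ 6) ∨ (a ^ 3 = eta ^ 6 ∧ b ^ 3 = eta ^ 3))) := by
  have h3 : (3 : k) ≠ 0 := fun h =>
    (heta.neZero' (n := 9)).out (by linear_combination (3 : k) * h)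
  have hE' : a ^ 3 + b ^ 3 + 1 = 0 := by simpa [onHesse] using hE
  have hω : IsPrimitiveRoot (eta ^ 3) 3 := heta.pow (by norm_num) rfl
  have hroots : a ^ 6 + a ^ 3 + 1 = 0 ↔ a ^ 3 = eta ^ 3 ∨ a ^ 3 = eta ^ 6 := by
    rw [show a ^ 6 = (a ^ 3) ^ 2 by ring, hω.sq_add_add_one_eq_zero_iff, ← pow_mul]
  refine ⟨⟨?_, fun h => ?_⟩, ?_⟩
  · rintro (h | h | h) <;>
      exact (nP_three_third_eq_zero_iff h3 hab hE').mp (third_eq_zero_of_projEq h)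
  · have h9 : eta ^ 9 = 1 := heta.pow_eq_one
    have hp := projEq_nP_three_of_sq_add_add_one h3 hab hE' h
    rcases hroots.mp h with hc | hc
    · right; right
      rwa [show a ^ 6 = eta ^ 6 by linear_combination (a ^ 3 + eta ^ 3) * hc] at hp
    · right; left
      rwa [show a ^ 6 = eta ^ 3 by linear_combination (a ^ 3 + eta ^ 6) * hc + eta ^ 3 * h9] at hp
  · rw [hroots]
    have hsum : (eta ^ 3) ^ 2 + eta ^ 3 + 1 = 0 := hω.sq_add_add_one_eq_zero_iff.mpr (.inl rfl)
    refine or_congr (and_iff_left_of_imp fun hc => ?_).symm (and_iff_left_of_imp fun hc => ?_).symm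
    · linear_combination hE' - hc - hsum
    · linear_combination hE' - hc - hsum

/-- Let `E = V(x³+y³+z³)` and `η` a primitive 9th root of unity. A point
`p = (a:b:1) ∈ E` with `ab ≠ 0` satisfies
`3p ∈ {(1:-1:0), (1:-η³:0), (1:-η⁶:0)}` (the fixed set of `τ₂²`) if and only if
`a⁶ + a³ + 1 = 0`, equivalently `(a³,b³) = (η³,η⁶)` or `(a³,b³) = (η⁶,η³)`. -/
theorem fermat_triple_in_fixed_iff {k : Type*} [Field k] [IsAlgClosed k] [CharZero k]
    (eta : k) (heta : IsPrimitiveRoot eta 9) (a b : k) (hab : a * b ≠ 0)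
    (hE : onHesse (0 : k) ((a, b, 1) : Pt k)) :
    ((projEq (nP 3 ((a, b, 1) : Pt k)) ((1, -1, 0) : Pt k) ∨
      projEq (nP 3 ((a, b, 1) : Pt k)) ((1, -eta ^ 3, 0) : Pt k) ∨
      projEq (nP 3 ((a, b, 1) : Pt k)) ((1, -eta ^ 6, 0) : Pt k)) ↔
        a ^ 6 + a ^ 3 + 1 = 0) ∧
    (a ^ 6 + a ^ 3 + 1 = 0 ↔
      ((a ^ 3 = eta ^ 3 ∧ b ^ 3 = eta ^ 6) ∨ (a ^ 3 = eta ^ 6 ∧ b ^ 3 = eta ^ 3))) :=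
  fermat_triple_in_fixed_iff_general eta heta a b hab hE
end
end

section
/- Let E = V(x^3+y^3+z^3). The 2-torsion points of E other than o_E = (1:-1:0) are exactly (1:1:-∛2), (1:1:-∛2·ε), (1:1:-∛2·ε^2), where ε is a primitive 3rd root of unity, and these three points form a single orbit under the cyclic group generated by τ2(a:b:c) = (b:a:cε). -/
open scoped Classical

noncomputable section

variable {k : Type*} [Field k]

/-- The automorphism `τ₂(a:b:c) = (b:a:cε)` of the Fermat cubic. -/
def tau2 {k : Type*} [Field k] (eps : k) (p : Pt k) : Pt k := (p.2.1, p.1, p.2.2 * eps)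

/-! Doubling on a Hesse cubic: the first chord formula vanishes identically on `(u • p, p)` and
`o_E + p` is a multiple of `p`, so `2p = (b(a³ - c³) : a(c³ - b³) : c(b³ - a³))`. On the Fermat
cubic this equals `o_E = (1 : -1 : 0)` only when `b = a` and `c³ = -2a³` (for `c = 0` the point
would be `o_E` itself), and the cube roots of `-2a³` are `-∛2 εⁱ a`, which `τ₂` permutes
cyclically by multiplying the last coordinate by `ε`. -/

theorem projEq_of_eq {p q : Pt k} (h : p = q) : projEq p q :=
  ⟨1, one_ne_zero, by simp [h]⟩

theorem projEq_smul_left {s : k} (hs : s ≠ 0) {p q : Pt k} :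
    projEq (s • p) q ↔ projEq p q := by
  constructor
  · rintro ⟨t, ht, rfl⟩
    exact ⟨t * s, mul_ne_zero ht hs, by simp [mul_assoc]⟩
  · rintro ⟨t, ht, rfl⟩
    refine ⟨t * s⁻¹, mul_ne_zero ht (inv_ne_zero hs), ?_⟩
    simp [mul_assoc, inv_mul_cancel_left₀ hs]

theorem projEq_iff_of_fst_eq_one (a b c y z : k) :
    projEq ((a, b, c) : Pt k) ((1, y, z) : Pt k) ↔ a ≠ 0 ∧ b = y * a ∧ c = z * a := by
  constructor
  · rintro ⟨t, -, h⟩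
    simp only [Prod.mk.injEq] at h
    obtain ⟨h1, h2, h3⟩ := h
    have ha : a ≠ 0 := by rintro rfl; simp at h1
    exact ⟨ha, by linear_combination b * h1 - a * h2, by linear_combination c * h1 - a * h3⟩
  · rintro ⟨ha, rfl, rfl⟩
    refine ⟨a⁻¹, inv_ne_zero ha, ?_⟩
    simp only [Prod.mk.injEq]
    refine ⟨?_, ?_, ?_⟩ <;> field_simp

theorem projEq_oE_iff (a b c : k) :
    projEq ((a, b, c) : Pt k) (oE : Pt k) ↔ a ≠ 0 ∧ b = -a ∧ c = 0 := by
  simp [oE, projEq_iff_of_fst_eq_one]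

theorem add1_smul_self (u : k) (p : Pt k) : add1 (u • p) p = (0, 0, 0) := by
  simp only [add1, Prod.smul_fst, Prod.smul_snd, smul_eq_mul, Prod.mk.injEq]
  refine ⟨?_, ?_, ?_⟩ <;> ring

theorem hesseAdd_smul_self (u : k) (p : Pt k) : hesseAdd (u • p) p = u ^ 2 • add2 p p := by
  rw [hesseAdd, add1_smul_self, if_neg (not_not_intro rfl)]
  simp only [add2, Prod.smul_fst, Prod.smul_snd, Prod.smul_mk, smul_eq_mul, Prod.mk.injEq]
  refine ⟨?_, ?_, ?_⟩ <;> ring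

theorem hesseAdd_oE_eq_smul {lam : k} {p : Pt k} (hp : p ≠ (0, 0, 0)) (hE : onHesse lam p) :
    ∃ u : k, u ≠ 0 ∧ hesseAdd oE p = u • p := by
  obtain ⟨a, b, c⟩ := p
  by_cases hc : c = 0
  · subst hc
    have ha : a ≠ 0 := by
      rintro rfl
      have hb : b ^ 3 = 0 := by simpa [onHesse] using hE
      exact hp (by simp [pow_eq_zero_iff three_ne_zero |>.mp hb])
    refine ⟨-a, neg_ne_zero.mpr ha, ?_⟩
    rw [hesseAdd, if_neg (by simp [add1, oE])]
    simp only [add2, oE, Prod.smul_mk, smul_eq_mul, Prod.mk.injEq]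
    refine ⟨?_, ?_, ?_⟩ <;> ring
  · have hadd1 : add1 oE (a, b, c) = -c • ((a, b, c) : Pt k) := by
      simp only [add1, oE, Prod.smul_mk, smul_eq_mul, Prod.mk.injEq]
      refine ⟨?_, ?_, ?_⟩ <;> ring
    refine ⟨-c, neg_ne_zero.mpr hc, ?_⟩
    rw [hesseAdd, if_pos (by simp [hadd1, hc]), hadd1]

theorem nP_two_eq_smul {lam : k} {p : Pt k} (hp : p ≠ (0, 0, 0)) (hE : onHesse lam p) :
    ∃ s : k, s ≠ 0 ∧ nP 2 p = s • add2 p p := by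
  obtain ⟨u, hu, h⟩ := hesseAdd_oE_eq_smul hp hE
  refine ⟨u ^ 2, pow_ne_zero 2 hu, ?_⟩
  change hesseAdd (hesseAdd oE p) p = _
  rw [h, hesseAdd_smul_self]

theorem isTor_two_iff {lam : k} {p : Pt k} (hp : p ≠ (0, 0, 0)) (hE : onHesse lam p) :
    isTor 2 p ↔ projEq (add2 p p) oE := by
  obtain ⟨s, hs, h⟩ := nP_two_eq_smul hp hE
  rw [isTor, h, projEq_smul_left hs]

theorem fermat_isTor_two_and_ne_oE_iff (h2 : (2 : k) ≠ 0) (h3 : (3 : k) ≠ 0) {a b c : k}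
    (hp : ((a, b, c) : Pt k) ≠ (0, 0, 0)) (hE : onHesse 0 ((a, b, c) : Pt k)) :
    (isTor 2 ((a, b, c) : Pt k) ∧ ¬ projEq ((a, b, c) : Pt k) oE) ↔
      a ≠ 0 ∧ b = a ∧ c ^ 3 = -2 * a ^ 3 := by
  have hF : a ^ 3 + b ^ 3 + c ^ 3 = 0 := by simpa [onHesse] using hE
  rw [isTor_two_iff hp hE, add2, projEq_oE_iff, projEq_oE_iff]
  dsimp only
  constructor
  · rintro ⟨⟨hX, hY, hZ⟩, hne⟩
    have hb : b ≠ 0 := by rintro rfl; simp at hX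
    have hcb : c = 0 ∨ b ^ 3 = a ^ 3 := by
      have : c * (b ^ 3 - a ^ 3) = 0 := by linear_combination hZ
      simpa [sub_eq_zero] using this
    rcases hcb with rfl | hba
    · have ha : a ≠ 0 := by rintro rfl; simp at hX
      have : a * b * ((a - b) * (a + b)) = 0 := by linear_combination hY
      rcases mul_eq_zero.mp ((mul_eq_zero.mp this).resolve_left (mul_ne_zero ha hb)) with h | h
      · have : 2 * a ^ 3 = 0 := by linear_combination hF + (a ^ 2 + a * b + b ^ 2) * h
        exact absurd (by simpa [h2] using this) ha
      · exact absurd ⟨ha, by linear_combination h, rfl⟩ hne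
    · have hac : a ^ 3 - c ^ 3 ≠ 0 := fun h => hX (by linear_combination b * h)
      have hab : (a ^ 3 - c ^ 3) * (b - a) = 0 := by linear_combination hY + a * hba
      obtain rfl : b = a := sub_eq_zero.mp ((mul_eq_zero.mp hab).resolve_left hac)
      exact ⟨hb, rfl, by linear_combination hF⟩
  · rintro ⟨ha, hba, hc⟩
    rw [hba]
    have hX : a * a * a ^ 2 - c ^ 2 * a * c = 3 * a ^ 4 := by linear_combination -a * hc
    refine ⟨⟨?_, ?_, by ring⟩, fun ⟨_, haa, _⟩ => ?_⟩
    · rw [hX]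
      exact mul_ne_zero h3 (pow_ne_zero 4 ha)
    · ring
    · have : 2 * a = 0 := by linear_combination haa
      exact ha (by simpa [h2] using this)

theorem IsPrimitiveRoot.pow_three_eq_pow_three_iff {R : Type*} [CommRing R] [IsDomain R]
    {ε : R} (hε : IsPrimitiveRoot ε 3) {x y : R} :
    x ^ 3 = y ^ 3 ↔ x = y ∨ x = ε * y ∨ x = ε ^ 2 * y := by
  have hε3 : ε ^ 3 = 1 := hε.pow_eq_one
  have hsum : 1 + ε + ε ^ 2 = 0 := by
    simpa [Finset.sum_range_succ] using hε.geom_sum_eq_zero (by norm_num)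
  constructor
  · intro h
    have : (x - y) * (x - ε * y) * (x - ε ^ 2 * y) = 0 := by
      linear_combination h + (ε * x * y ^ 2 - x ^ 2 * y) * hsum - y ^ 3 * hε3
    simpa [sub_eq_zero, or_assoc] using this
  · rintro (rfl | rfl | rfl)
    · rfl
    · linear_combination y ^ 3 * hε3
    · linear_combination (ε ^ 3 + 1) * y ^ 3 * hε3

theorem fermat_two_torsion_general {k : Type*} [Field k] [CharZero k]
    (eps r : k) (heps : IsPrimitiveRoot eps 3) (hr : r ^ 3 = 2) :
    (∀ p : Pt k, p ≠ (0, 0, 0) → onHesse (0 : k) p →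
      ((isTor 2 p ∧ ¬ projEq p (oE : Pt k)) ↔
        (projEq p ((1, 1, -r) : Pt k) ∨ projEq p ((1, 1, -(r * eps)) : Pt k) ∨
          projEq p ((1, 1, -(r * eps ^ 2)) : Pt k)))) ∧
    projEq (tau2 eps ((1, 1, -r) : Pt k)) ((1, 1, -(r * eps)) : Pt k) ∧
    projEq (tau2 eps ((1, 1, -(r * eps)) : Pt k)) ((1, 1, -(r * eps ^ 2)) : Pt k) ∧
    projEq (tau2 eps ((1, 1, -(r * eps ^ 2)) : Pt k)) ((1, 1, -r) : Pt k) := by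
  refine ⟨fun ⟨a, b, c⟩ hp hE => ?_, projEq_of_eq ?_, projEq_of_eq ?_, projEq_of_eq ?_⟩
  · have hc : c ^ 3 = -2 * a ^ 3 ↔ c ^ 3 = (-r * a) ^ 3 := by
      rw [show (-r * a) ^ 3 = -2 * a ^ 3 by linear_combination -a ^ 3 * hr]
    rw [fermat_isTor_two_and_ne_oE_iff two_ne_zero three_ne_zero hp hE, hc,
      heps.pow_three_eq_pow_three_iff, projEq_iff_of_fst_eq_one, projEq_iff_of_fst_eq_one,
      projEq_iff_of_fst_eq_one, show eps * (-r * a) = -(r * eps) * a by ring,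
      show eps ^ 2 * (-r * a) = -(r * eps ^ 2) * a by ring, one_mul]
    tauto
  all_goals simp only [tau2, Prod.mk.injEq, true_and]
  · ring
  · ring
  · linear_combination -r * heps.pow_eq_one

/-- The 2-torsion points of the Fermat cubic `E = V(x³+y³+z³)` other than
`o_E = (1:-1:0)` are exactly `(1:1:-∛2)`, `(1:1:-∛2·ε)`, `(1:1:-∛2·ε²)`
(`ε` a primitive 3rd root of unity, `∛2` a cube root of 2), and these three
points form a single orbit under the cyclic group generated by
`τ₂(a:b:c) = (b:a:cε)`. -/
theorem fermat_two_torsion {k : Type*} [Field k] [IsAlgClosed k] [CharZero k]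
    (eps r : k) (heps : IsPrimitiveRoot eps 3) (hr : r ^ 3 = 2) :
    (∀ p : Pt k, p ≠ (0, 0, 0) → onHesse (0 : k) p →
      ((isTor 2 p ∧ ¬ projEq p (oE : Pt k)) ↔
        (projEq p ((1, 1, -r) : Pt k) ∨ projEq p ((1, 1, -(r * eps)) : Pt k) ∨
          projEq p ((1, 1, -(r * eps ^ 2)) : Pt k)))) ∧
    projEq (tau2 eps ((1, 1, -r) : Pt k)) ((1, 1, -(r * eps)) : Pt k) ∧
    projEq (tau2 eps ((1, 1, -(r * eps)) : Pt k)) ((1, 1, -(r * eps ^ 2)) : Pt k) ∧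
    projEq (tau2 eps ((1, 1, -(r * eps ^ 2)) : Pt k)) ((1, 1, -r) : Pt k) :=
  fermat_two_torsion_general eps r heps hr
end
end

section
/- Let w_p = a(xyz+yzx+zxy)+b(xzy+yxz+zyx)+c(x^3+y^3+z^3) with λ = 1+√3 and (a:b:c) = (1:1:λ), and τ3 ∈ GL(V) given on basis vectors by τ3(x) = ε^2 x + ε y + z, τ3(y) = ε x + ε^2 y + z, τ3(z) = x + y + z (ε a primitive 3rd root of unity). Then (τ3 ⊗ τ3 ⊗ τ3)(w_p) = 3√3 · w_p; in particular τ3 ∈ Aut(w_p). -/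
noncomputable section

/-- An element of `V ⊗ V ⊗ V` (for `V` 3-dimensional with basis `x₀, x₁, x₂`,
written `x, y, z`) given by its coefficients in the basis `xᵢ ⊗ xⱼ ⊗ xₗ`. -/
abbrev Pot (k : Type*) := Fin 3 → Fin 3 → Fin 3 → k

variable {k : Type*} [Field k]

/-- The basis monomial `xᵢ ⊗ xⱼ ⊗ xₗ`. -/
def mono (i j l : Fin 3) : Pot k :=
  fun a b c => if a = i ∧ b = j ∧ c = l then 1 else 0

/-- The action of `θ ⊗ θ ⊗ θ` on `V ⊗ V ⊗ V`, where `θ ∈ GL(V)` has matrix `M`,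
i.e. `θ(xₐ) = ∑ᵢ M i a • xᵢ`. -/
def actT (M : Matrix (Fin 3) (Fin 3) k) (w : Pot k) : Pot k :=
  fun i j l => ∑ a : Fin 3, ∑ b : Fin 3, ∑ c : Fin 3, M i a * M j b * M l c * w a b c

/-- The Sklyanin potential
`w_p = a(xyz+yzx+zxy) + b(xzy+yxz+zyx) + c(x³+y³+z³)`. -/
def skly (a b c : k) : Pot k :=
  a • (mono 0 1 2 + mono 1 2 0 + mono 2 0 1) +
    b • (mono 0 2 1 + mono 1 0 2 + mono 2 1 0) +
    c • (mono 0 0 0 + mono 1 1 1 + mono 2 2 2)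

/-! Since `θ ↦ θ ⊗ θ ⊗ θ` acts linearly on potentials, each of the 27 coefficients of
`(τ₃ ⊗ τ₃ ⊗ τ₃)(w_p)` is an explicit cubic expression in the entries of `τ₃`, so the identity
`(τ₃ ⊗ τ₃ ⊗ τ₃)(w_p) = 3√3 · w_p` amounts to 27 polynomial identities in `ε` and `s = √3`
modulo `ε² + ε + 1` and `s² - 3`, which hold in every field. Invertibility of `τ₃` comes from
`det τ₃ = 3ε(1 - ε)`, nonzero in characteristic zero. -/

lemma IsPrimitiveRoot.sq_add_self_add_one {ε : k} (h : IsPrimitiveRoot ε 3) :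
    ε ^ 2 + ε + 1 = 0 := by
  have h' := h.geom_sum_eq_zero (by norm_num)
  simp only [Finset.sum_range_succ, Finset.sum_range_zero, pow_zero, pow_one, zero_add] at h'
  linear_combination h'

lemma actT_mono_apply (M : Matrix (Fin 3) (Fin 3) k) (i j l a b c : Fin 3) :
    actT M (mono a b c) i j l = M i a * M j b * M l c := by
  simp [actT, mono, ite_and, Finset.sum_ite_eq']

lemma actT_add (M : Matrix (Fin 3) (Fin 3) k) (v w : Pot k) :
    actT M (v + w) = actT M v + actT M w := by
  funext i j l
  simp only [actT, Pi.add_apply, mul_add, Finset.sum_add_distrib]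

lemma actT_smul (M : Matrix (Fin 3) (Fin 3) k) (a : k) (w : Pot k) :
    actT M (a • w) = a • actT M w := by
  funext i j l
  simp only [actT, Pi.smul_apply, smul_eq_mul, Finset.mul_sum, mul_left_comm _ a]

lemma actT_skly_apply (M : Matrix (Fin 3) (Fin 3) k) (a b c : k) (i j l : Fin 3) :
    actT M (skly a b c) i j l =
      a * (M i 0 * M j 1 * M l 2 + M i 1 * M j 2 * M l 0 + M i 2 * M j 0 * M l 1) +
      b * (M i 0 * M j 2 * M l 1 + M i 1 * M j 0 * M l 2 + M i 2 * M j 1 * M l 0) +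
      c * (M i 0 * M j 0 * M l 0 + M i 1 * M j 1 * M l 1 + M i 2 * M j 2 * M l 2) := by
  simp only [skly, actT_add, actT_smul, Pi.add_apply, Pi.smul_apply, smul_eq_mul,
    actT_mono_apply]

def tau3 (ε : k) : Matrix (Fin 3) (Fin 3) k :=
  !![ε ^ 2, ε, 1; ε, ε ^ 2, 1; 1, 1, 1]

lemma det_tau3 {ε : k} (h : ε ^ 3 = 1) : (tau3 ε).det = 3 * ε * (1 - ε) := by
  rw [tau3, Matrix.det_fin_three]
  simp only [Matrix.of_apply, Matrix.cons_val', Matrix.cons_val_zero, Matrix.cons_val_one,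
    Matrix.cons_val, Matrix.cons_val_fin_one]
  linear_combination ε * h

lemma isUnit_det_tau3 [CharZero k] {ε : k} (h : IsPrimitiveRoot ε 3) : IsUnit (tau3 ε).det := by
  rw [det_tau3 h.pow_eq_one, isUnit_iff_ne_zero]
  exact mul_ne_zero (mul_ne_zero three_ne_zero (h.ne_zero (by norm_num)))
    (sub_ne_zero.mpr (h.ne_one (by norm_num)).symm)

lemma actT_tau3_skly {ε s : k} (hε : ε ^ 2 + ε + 1 = 0) (hs : s ^ 2 = 3) :
    actT (tau3 ε) (skly 1 1 (1 + s)) = (3 * s) • skly 1 1 (1 + s) := by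
  funext i j l
  rw [actT_skly_apply]
  fin_cases i <;> fin_cases j <;> fin_cases l <;>
    simp only [tau3, skly, mono, Matrix.of_apply, Matrix.cons_val', Matrix.cons_val_zero,
      Matrix.cons_val_one, Matrix.cons_val, Matrix.cons_val_fin_one, Fin.reduceFinMk, Fin.isValue,
      Pi.add_apply, Pi.smul_apply, smul_eq_mul, Fin.reduceEq, and_self, and_false, and_true,
      ↓reduceIte, mul_one, mul_zero, add_zero, zero_add] <;>
    grind

theorem tau3_in_Aut_skly_general {k : Type*} [Field k] [CharZero k]
    (eps s : k) (heps : IsPrimitiveRoot eps 3) (hs : s ^ 2 = 3) :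
    actT (!![eps ^ 2, eps, 1; eps, eps ^ 2, 1; 1, 1, 1]) (skly 1 1 (1 + s)) =
        (3 * s) • skly (1 : k) 1 (1 + s) ∧
    IsUnit (Matrix.det (!![eps ^ 2, eps, 1; eps, eps ^ 2, 1; 1, 1, 1])) ∧
    (∃ mu : k, mu ≠ 0 ∧
      actT (!![eps ^ 2, eps, 1; eps, eps ^ 2, 1; 1, 1, 1]) (skly 1 1 (1 + s)) =
        mu • skly (1 : k) 1 (1 + s)) := by
  have hact := actT_tau3_skly heps.sq_add_self_add_one hs
  have hs0 : s ≠ 0 := by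
    rintro rfl
    norm_num at hs
  exact ⟨hact, isUnit_det_tau3 heps, 3 * s, mul_ne_zero three_ne_zero hs0, hact⟩

/-- Let `λ = 1 + √3`, `w_p` the Sklyanin potential with `(a:b:c) = (1:1:λ)`, and
`τ₃ ∈ GL(V)` given by `τ₃(x) = ε²x + εy + z`, `τ₃(y) = εx + ε²y + z`,
`τ₃(z) = x + y + z` (`ε` a primitive 3rd root of unity). Then
`(τ₃ ⊗ τ₃ ⊗ τ₃)(w_p) = 3√3 · w_p`; in particular `τ₃` is invertible and
`τ₃ ∈ Aut(w_p)`. -/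
theorem tau3_in_Aut_skly {k : Type*} [Field k] [IsAlgClosed k] [CharZero k]
    (eps s : k) (heps : IsPrimitiveRoot eps 3) (hs : s ^ 2 = 3) :
    actT (!![eps ^ 2, eps, 1; eps, eps ^ 2, 1; 1, 1, 1]) (skly 1 1 (1 + s)) =
        (3 * s) • skly (1 : k) 1 (1 + s) ∧
    IsUnit (Matrix.det (!![eps ^ 2, eps, 1; eps, eps ^ 2, 1; 1, 1, 1])) ∧
    (∃ mu : k, mu ≠ 0 ∧
      actT (!![eps ^ 2, eps, 1; eps, eps ^ 2, 1; 1, 1, 1]) (skly 1 1 (1 + s)) =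
        mu • skly (1 : k) 1 (1 + s)) :=
  tau3_in_Aut_skly_general eps s heps hs
end
end
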